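/- Assume 0 < μ_1 (the focusing case). Then g is strictly increasing on (−∞, μ_1), and there exists a unique β̄ ∈ (−∞, μ_1) with g(β̄) = 0. Moreover β̄ < 0, g(β) < 0 for all β < β̄, and g(β) > 0 for all β with β̄ < β < μ_1. -/

import Mathlib

/-!
For `β < μ₁` write `g β = 1 + ∑ⱼ β / (μⱼ - β)`. Since every `μⱼ > 0`, each summand is strictly
increasing on `(-∞, μⱼ)` and tends to `-1` as `β → -∞`. Hence `g` increases strictly from the limit
`1 - n < 0` to `g 0 = 1`, and the intermediate value theorem gives its unique zero, which is negative.
-/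

open Set Finset Filter Topology

section Secular

variable {ι : Type*} [Fintype ι] (μ : ι → ℝ)

noncomputable def secular (β : ℝ) : ℝ := 1 + ∑ j, β / (μ j - β)

theorem secular_zero : secular μ 0 = 1 := by simp [secular]

theorem strictMonoOn_div_sub_self {m : ℝ} (hm : 0 < m) :
    StrictMonoOn (fun β : ℝ => β / (m - β)) (Iio m) := by
  intro a (ha : a < m) b (hb : b < m) hab
  rw [div_lt_div_iff₀ (sub_pos.2 ha) (sub_pos.2 hb)]
  nlinarith

theorem tendsto_div_sub_self_atBot (m : ℝ) :
    Tendsto (fun β : ℝ => β / (m - β)) atBot (𝓝 (-1)) := by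
  have hden : Tendsto (fun β : ℝ => m - β) atBot atTop := by
    simpa only [sub_eq_add_neg] using tendsto_atTop_add_const_left _ m tendsto_neg_atBot_atTop
  have hfrac : Tendsto (fun β : ℝ => -1 + m / (m - β)) atBot (𝓝 (-1)) := by
    simpa using (tendsto_const_nhds (x := m)).div_atTop hden |>.const_add (-1)
  refine hfrac.congr' ?_
  filter_upwards [eventually_lt_atBot m] with β hβ
  field_simp [(sub_pos.2 hβ).ne']
  ring

theorem tendsto_secular_atBot :
    Tendsto (secular μ) atBot (𝓝 (1 - Fintype.card ι)) := by
  have := (tendsto_finsetSum univ fun j _ => tendsto_div_sub_self_atBot (μ j)).const_add 1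
  unfold secular
  simpa [← sub_eq_add_neg] using this

variable {μ} {m : ℝ} (hm : ∀ j, m ≤ μ j)
include hm

theorem continuousOn_secular : ContinuousOn (secular μ) (Iio m) := by
  refine continuousOn_const.add (continuousOn_finsetSum _ fun j _ => ?_)
  exact continuousOn_id.div (continuousOn_const.sub continuousOn_id)
    fun β (hβ : β < m) => (sub_pos.2 (hβ.trans_le (hm j))).ne'

theorem strictMonoOn_secular [Nonempty ι] (hpos : ∀ j, 0 < μ j) :
    StrictMonoOn (secular μ) (Iio m) := by
  intro a ha b hb hab
  refine add_lt_add_right (sum_lt_sum_of_nonempty (univ_nonempty (α := ι)) fun j _ => ?_) 1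
  exact strictMonoOn_div_sub_self (hpos j) (lt_of_lt_of_le ha (hm j)) (lt_of_lt_of_le hb (hm j)) hab

theorem exists_neg_secular_eq_zero (hm₀ : 0 < m) (hcard : 2 ≤ Fintype.card ι) :
    ∃ β < 0, secular μ β = 0 := by
  have hlim : (1 : ℝ) - Fintype.card ι < 0 := by
    have : (2 : ℝ) ≤ Fintype.card ι := by exact_mod_cast hcard
    linarith
  obtain ⟨β₀, hβ₀, hβ₀neg⟩ :=
    (((tendsto_secular_atBot μ).eventually (gt_mem_nhds hlim)).and (eventually_lt_atBot 0)).exists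
  have hcont : ContinuousOn (secular μ) (Icc β₀ 0) :=
    (continuousOn_secular hm).mono fun β hβ => hβ.2.trans_lt hm₀
  obtain ⟨β, hβ, hβzero⟩ := intermediate_value_Ioo hβ₀neg.le hcont
    ⟨hβ₀, by simp [secular_zero]⟩
  exact ⟨β, hβ.2, hβzero⟩

end Secular

theorem focusing_g_unique_zero (n : ℕ) (hn : 2 ≤ n) (μ : Fin n → ℝ) (hμ : Monotone μ)
    (g : ℝ → ℝ)
    (hg : ∀ β : ℝ, (∀ j, β ≠ μ j) → g β = 1 + β * ∑ j, 1 / (μ j - β))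
    (hfoc : 0 < μ ⟨0, by omega⟩) :
    StrictMonoOn g (Iio (μ ⟨0, by omega⟩)) ∧
    ∃ βb : ℝ, βb < μ ⟨0, by omega⟩ ∧ g βb = 0 ∧
      (∀ β' : ℝ, β' < μ ⟨0, by omega⟩ → g β' = 0 → β' = βb) ∧
      βb < 0 ∧ (∀ β : ℝ, β < βb → g β < 0) ∧
      (∀ β : ℝ, βb < β → β < μ ⟨0, by omega⟩ → 0 < g β) := by
  set μ₁ := μ ⟨0, by omega⟩
  have : Nonempty (Fin n) := ⟨⟨0, by omega⟩⟩
  have hle : ∀ j, μ₁ ≤ μ j := fun j => hμ (Fin.mk_le_of_le_val (Nat.zero_le _))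
  have hgeq : EqOn (secular μ) g (Iio μ₁) := fun β hβ => by
    rw [hg β fun j => (hβ.trans_le (hle j)).ne, secular, mul_sum]
    simp only [mul_one_div]
  have mono : StrictMonoOn g (Iio μ₁) :=
    (strictMonoOn_secular hle fun j => hfoc.trans_le (hle j)).congr hgeq
  obtain ⟨βb, hβb_neg, hβb⟩ := exists_neg_secular_eq_zero hle hfoc (by simpa using hn)
  have hβb_mem : βb ∈ Iio μ₁ := hβb_neg.trans hfoc
  rw [hgeq hβb_mem] at hβb
  refine ⟨mono, βb, hβb_mem, hβb, fun β hβ h => mono.injOn hβ hβb_mem (h.trans hβb.symm),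
    hβb_neg, fun β hβ => ?_, fun β h₁ h₂ => ?_⟩
  · simpa [hβb] using mono (hβ.trans hβb_mem) hβb_mem hβ
  · simpa [hβb] using mono hβb_mem h₂ h₁
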